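/- Non-decomposition (SCL): there is no *-term P such that se(P) can be decomposed as X[□↦Y] with X ∈ 𝒯_□ and Y ∈ 𝒯, where X ≠ □, X contains □, and X contains neither T nor F. -/
import Mathlib


/-! Shared definitions for left-sequential logics (FEL and SCL),
    evaluation trees, and decompositions. -/

/-- FEL-terms over atoms `A` (`and` = full left-sequential conjunction `∧•`,
    `or` = full left-sequential disjunction `∨•`). -/
inductive FTerm (A : Type) : Type
  | atom : A → FTerm A
  | tru  : FTerm A
  | fls  : FTerm A
  | neg  : FTerm A → FTerm A
  | and  : FTerm A → FTerm A → FTerm A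
  | or   : FTerm A → FTerm A → FTerm A

/-- SCL-terms over atoms `A` (`and` = short-circuit conjunction `∧◦`,
    `or` = short-circuit disjunction `∨◦`). -/
inductive STerm (A : Type) : Type
  | atom : A → STerm A
  | tru  : STerm A
  | fls  : STerm A
  | neg  : STerm A → STerm A
  | and  : STerm A → STerm A → STerm A
  | or   : STerm A → STerm A → STerm A

/-- Evaluation trees: finite binary trees over `A` with leaves `T`, `F`. -/
inductive ETree (A : Type) : Type
  | tru  : ETree A
  | fls  : ETree A
  | node : ETree A → A → ETree A → ETree A

namespace ETree

/-- `X.subst Y Z = X[T↦Y, F↦Z]`. -/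
def subst {A : Type} : ETree A → ETree A → ETree A → ETree A
  | .tru, y, _ => y
  | .fls, _, z => z
  | .node l a r, y, z => .node (subst l y z) a (subst r y z)

def hasTru {A : Type} : ETree A → Prop
  | .tru => True
  | .fls => False
  | .node l _ r => hasTru l ∨ hasTru r

def hasFls {A : Type} : ETree A → Prop
  | .tru => False
  | .fls => True
  | .node l _ r => hasFls l ∨ hasFls r

def depth {A : Type} : ETree A → ℕ
  | .tru => 0
  | .fls => 0
  | .node l _ r => 1 + max (depth l) (depth r)

end ETree

/-- The full evaluation function `fe : FTerm → 𝒯`. -/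
def fe {A : Type} : FTerm A → ETree A
  | FTerm.tru => ETree.tru
  | FTerm.fls => ETree.fls
  | FTerm.atom a => ETree.node ETree.tru a ETree.fls
  | FTerm.neg p => (fe p).subst ETree.fls ETree.tru
  | FTerm.and p q => (fe p).subst (fe q) ((fe q).subst ETree.fls ETree.fls)
  | FTerm.or p q => (fe p).subst ((fe q).subst ETree.tru ETree.tru) (fe q)

/-- The short-circuit evaluation function `se : STerm → 𝒯`. -/
def se {A : Type} : STerm A → ETree A
  | STerm.tru => ETree.tru
  | STerm.fls => ETree.fls
  | STerm.atom a => ETree.node ETree.tru a ETree.fls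
  | STerm.neg p => (se p).subst ETree.fls ETree.tru
  | STerm.and p q => (se p).subst (se q) ETree.fls
  | STerm.or p q => (se p).subst ETree.tru (se q)

/-- Derivability from EqFFEL by equational logic. -/
inductive EqFFEL {A : Type} : FTerm A → FTerm A → Prop
  | refl (p : FTerm A) : EqFFEL p p
  | symm {p q : FTerm A} : EqFFEL p q → EqFFEL q p
  | trans {p q r : FTerm A} : EqFFEL p q → EqFFEL q r → EqFFEL p r
  | neg_congr {p q : FTerm A} : EqFFEL p q → EqFFEL (FTerm.neg p) (FTerm.neg q)
  | and_congr {p p' q q' : FTerm A} :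
      EqFFEL p p' → EqFFEL q q' → EqFFEL (FTerm.and p q) (FTerm.and p' q')
  | or_congr {p p' q q' : FTerm A} :
      EqFFEL p p' → EqFFEL q q' → EqFFEL (FTerm.or p q) (FTerm.or p' q')
  | fel1 : EqFFEL FTerm.fls (FTerm.neg FTerm.tru)
  | fel2 (x y : FTerm A) : EqFFEL (FTerm.or x y) (FTerm.neg (FTerm.and (FTerm.neg x) (FTerm.neg y)))
  | fel3 (x : FTerm A) : EqFFEL (FTerm.neg (FTerm.neg x)) x
  | fel4 (x y z : FTerm A) : EqFFEL (FTerm.and (FTerm.and x y) z) (FTerm.and x (FTerm.and y z))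
  | fel5 (x : FTerm A) : EqFFEL (FTerm.and FTerm.tru x) x
  | fel6 (x : FTerm A) : EqFFEL (FTerm.and x FTerm.tru) x
  | fel7 (x : FTerm A) : EqFFEL (FTerm.and x FTerm.fls) (FTerm.and FTerm.fls x)
  | fel8 (x : FTerm A) : EqFFEL (FTerm.and x FTerm.fls) (FTerm.and (FTerm.neg x) FTerm.fls)
  | fel9 (x y : FTerm A) :
      EqFFEL (FTerm.or (FTerm.and x FTerm.fls) y) (FTerm.and (FTerm.or x FTerm.tru) y)
  | fel10 (x y : FTerm A) :
      EqFFEL (FTerm.or x (FTerm.and y FTerm.fls)) (FTerm.and x (FTerm.or y FTerm.tru))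

/-- Derivability from EqFSCL by equational logic. -/
inductive EqFSCL {A : Type} : STerm A → STerm A → Prop
  | refl (p : STerm A) : EqFSCL p p
  | symm {p q : STerm A} : EqFSCL p q → EqFSCL q p
  | trans {p q r : STerm A} : EqFSCL p q → EqFSCL q r → EqFSCL p r
  | neg_congr {p q : STerm A} : EqFSCL p q → EqFSCL (STerm.neg p) (STerm.neg q)
  | and_congr {p p' q q' : STerm A} :
      EqFSCL p p' → EqFSCL q q' → EqFSCL (STerm.and p q) (STerm.and p' q')
  | or_congr {p p' q q' : STerm A} :
      EqFSCL p p' → EqFSCL q q' → EqFSCL (STerm.or p q) (STerm.or p' q')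
  | scl1 : EqFSCL STerm.fls (STerm.neg STerm.tru)
  | scl2 (x y : STerm A) : EqFSCL (STerm.or x y) (STerm.neg (STerm.and (STerm.neg x) (STerm.neg y)))
  | scl3 (x : STerm A) : EqFSCL (STerm.neg (STerm.neg x)) x
  | scl4 (x y z : STerm A) : EqFSCL (STerm.and (STerm.and x y) z) (STerm.and x (STerm.and y z))
  | scl5 (x : STerm A) : EqFSCL (STerm.and STerm.tru x) x
  | scl6 (x : STerm A) : EqFSCL (STerm.and x STerm.tru) x
  | scl7 (x : STerm A) : EqFSCL (STerm.and STerm.fls x) STerm.fls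
  | scl8 (x : STerm A) : EqFSCL (STerm.and x STerm.fls) (STerm.and (STerm.neg x) STerm.fls)
  | scl9 (x y : STerm A) :
      EqFSCL (STerm.or (STerm.and x STerm.fls) y) (STerm.and (STerm.or x STerm.tru) y)
  | scl10 (x y z : STerm A) :
      EqFSCL (STerm.or (STerm.and x y) (STerm.and z STerm.fls))
             (STerm.and (STerm.or x (STerm.and z STerm.fls)) (STerm.or y (STerm.and z STerm.fls)))

/-! ### FEL Normal Form grammar -/

/-- T-terms: `P^T ::= T | a ∨• P^T`. -/
inductive IsFT_T {A : Type} : FTerm A → Prop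
  | tru : IsFT_T FTerm.tru
  | or (a : A) {p : FTerm A} : IsFT_T p → IsFT_T (FTerm.or (FTerm.atom a) p)

/-- F-terms: `P^F ::= F | a ∧• P^F`. -/
inductive IsFT_F {A : Type} : FTerm A → Prop
  | fls : IsFT_F FTerm.fls
  | and (a : A) {p : FTerm A} : IsFT_F p → IsFT_F (FTerm.and (FTerm.atom a) p)

/-- ℓ-terms: `P^ℓ ::= a ∧• P^T | ¬a ∧• P^T`. -/
inductive IsFT_L {A : Type} : FTerm A → Prop
  | pos (a : A) {p : FTerm A} : IsFT_T p → IsFT_L (FTerm.and (FTerm.atom a) p)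
  | neg (a : A) {p : FTerm A} : IsFT_T p → IsFT_L (FTerm.and (FTerm.neg (FTerm.atom a)) p)

mutual
/-- `P^c ::= P^ℓ | P^* ∧• P^d`. -/
inductive IsFT_C {A : Type} : FTerm A → Prop
  | ell {p : FTerm A} : IsFT_L p → IsFT_C p
  | and {p q : FTerm A} : IsFT_Star p → IsFT_D q → IsFT_C (FTerm.and p q)
/-- `P^d ::= P^ℓ | P^* ∨• P^c`. -/
inductive IsFT_D {A : Type} : FTerm A → Prop
  | ell {p : FTerm A} : IsFT_L p → IsFT_D p
  | or {p q : FTerm A} : IsFT_Star p → IsFT_C q → IsFT_D (FTerm.or p q)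
/-- `P^* ::= P^c | P^d`. -/
inductive IsFT_Star {A : Type} : FTerm A → Prop
  | c {p : FTerm A} : IsFT_C p → IsFT_Star p
  | d {p : FTerm A} : IsFT_D p → IsFT_Star p
end

/-- FEL Normal Form: `P ::= P^T | P^F | P^T ∧• P^*`. -/
inductive IsFNF {A : Type} : FTerm A → Prop
  | t {p : FTerm A} : IsFT_T p → IsFNF p
  | f {p : FTerm A} : IsFT_F p → IsFNF p
  | ts {p q : FTerm A} : IsFT_T p → IsFT_Star q → IsFNF (FTerm.and p q)

/-! ### SCL Normal Form grammar -/

/-- T-terms: `P^T ::= T | (a ∧◦ P^T) ∨◦ P^T`. -/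
inductive IsST_T {A : Type} : STerm A → Prop
  | tru : IsST_T STerm.tru
  | or (a : A) {p q : STerm A} :
      IsST_T p → IsST_T q → IsST_T (STerm.or (STerm.and (STerm.atom a) p) q)

/-- F-terms: `P^F ::= F | (a ∨◦ P^F) ∧◦ P^F`. -/
inductive IsST_F {A : Type} : STerm A → Prop
  | fls : IsST_F STerm.fls
  | and (a : A) {p q : STerm A} :
      IsST_F p → IsST_F q → IsST_F (STerm.and (STerm.or (STerm.atom a) p) q)

/-- ℓ-terms: `P^ℓ ::= (a ∧◦ P^T) ∨◦ P^F | (¬a ∧◦ P^T) ∨◦ P^F`. -/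
inductive IsST_L {A : Type} : STerm A → Prop
  | pos (a : A) {p q : STerm A} :
      IsST_T p → IsST_F q → IsST_L (STerm.or (STerm.and (STerm.atom a) p) q)
  | neg (a : A) {p q : STerm A} :
      IsST_T p → IsST_F q → IsST_L (STerm.or (STerm.and (STerm.neg (STerm.atom a)) p) q)

mutual
/-- `P^c ::= P^ℓ | P^* ∧◦ P^d`. -/
inductive IsST_C {A : Type} : STerm A → Prop
  | ell {p : STerm A} : IsST_L p → IsST_C p
  | and {p q : STerm A} : IsST_Star p → IsST_D q → IsST_C (STerm.and p q)
/-- `P^d ::= P^ℓ | P^* ∨◦ P^c`. -/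
inductive IsST_D {A : Type} : STerm A → Prop
  | ell {p : STerm A} : IsST_L p → IsST_D p
  | or {p q : STerm A} : IsST_Star p → IsST_C q → IsST_D (STerm.or p q)
/-- `P^* ::= P^c | P^d`. -/
inductive IsST_Star {A : Type} : STerm A → Prop
  | c {p : STerm A} : IsST_C p → IsST_Star p
  | d {p : STerm A} : IsST_D p → IsST_Star p
end

/-- SCL Normal Form: `P ::= P^T | P^F | P^T ∧◦ P^*`. -/
inductive IsSNF {A : Type} : STerm A → Prop
  | t {p : STerm A} : IsST_T p → IsSNF p
  | f {p : STerm A} : IsST_F p → IsSNF p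
  | ts {p q : STerm A} : IsST_T p → IsST_Star q → IsSNF (STerm.and p q)

/-! ### Trees with box leaves -/

/-- `𝒯_□`: trees over `A` with leaves in `{T, F, □}`. -/
inductive ETreeB (A : Type) : Type
  | tru  : ETreeB A
  | fls  : ETreeB A
  | box  : ETreeB A
  | node : ETreeB A → A → ETreeB A → ETreeB A

namespace ETreeB

/-- `X.substBox Y = X[□↦Y]`. -/
def substBox {A : Type} : ETreeB A → ETree A → ETree A
  | .tru, _ => ETree.tru
  | .fls, _ => ETree.fls
  | .box, y => y
  | .node l a r, y => ETree.node (substBox l y) a (substBox r y)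

def hasBox {A : Type} : ETreeB A → Prop
  | .tru => False
  | .fls => False
  | .box => True
  | .node l _ r => hasBox l ∨ hasBox r

def hasTru {A : Type} : ETreeB A → Prop
  | .tru => True
  | .fls => False
  | .box => False
  | .node l _ r => hasTru l ∨ hasTru r

def hasFls {A : Type} : ETreeB A → Prop
  | .tru => False
  | .fls => True
  | .box => False
  | .node l _ r => hasFls l ∨ hasFls r

end ETreeB

/-- `𝒯_{1,2}`: trees over `A` with leaves in `{T, F, □₁, □₂}`. -/
inductive ETree2 (A : Type) : Type
  | tru  : ETree2 A
  | fls  : ETree2 A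
  | box1 : ETree2 A
  | box2 : ETree2 A
  | node : ETree2 A → A → ETree2 A → ETree2 A

namespace ETree2

/-- `X.substBoxes Y Z = X[□₁↦Y, □₂↦Z]`. -/
def substBoxes {A : Type} : ETree2 A → ETree A → ETree A → ETree A
  | .tru, _, _ => ETree.tru
  | .fls, _, _ => ETree.fls
  | .box1, y, _ => y
  | .box2, _, z => z
  | .node l a r, y, z => ETree.node (substBoxes l y z) a (substBoxes r y z)

def hasBox1 {A : Type} : ETree2 A → Prop
  | .tru => False
  | .fls => False
  | .box1 => True
  | .box2 => False
  | .node l _ r => hasBox1 l ∨ hasBox1 r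

def hasBox2 {A : Type} : ETree2 A → Prop
  | .tru => False
  | .fls => False
  | .box1 => False
  | .box2 => True
  | .node l _ r => hasBox2 l ∨ hasBox2 r

def hasTru {A : Type} : ETree2 A → Prop
  | .tru => True
  | .fls => False
  | .box1 => False
  | .box2 => False
  | .node l _ r => hasTru l ∨ hasTru r

def hasFls {A : Type} : ETree2 A → Prop
  | .tru => False
  | .fls => True
  | .box1 => False
  | .box2 => False
  | .node l _ r => hasFls l ∨ hasFls r

end ETree2

namespace ETree

/-- `X[T↦□₁, F↦□₂]`. -/
def toBoxes {A : Type} : ETree A → ETree2 A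
  | .tru => ETree2.box1
  | .fls => ETree2.box2
  | .node l a r => ETree2.node (toBoxes l) a (toBoxes r)

/-- `X[T↦□]`. -/
def truToBox {A : Type} : ETree A → ETreeB A
  | .tru => ETreeB.box
  | .fls => ETreeB.fls
  | .node l a r => ETreeB.node (truToBox l) a (truToBox r)

/-- `X[F↦□]`. -/
def flsToBox {A : Type} : ETree A → ETreeB A
  | .tru => ETreeB.tru
  | .fls => ETreeB.box
  | .node l a r => ETreeB.node (flsToBox l) a (flsToBox r)

end ETree

/-! ### FEL decompositions -/

/-- Candidate conjunction decomposition (FEL):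
    `X = Y[□₁↦Z, □₂↦Z[T↦F]]`, `Y` contains both boxes, neither `T` nor `F`,
    and `Z` contains both `T` and `F`. -/
def IsCcdF {A : Type} (X : ETree A) (Y : ETree2 A) (Z : ETree A) : Prop :=
  X = Y.substBoxes Z (Z.subst ETree.fls ETree.fls) ∧
  Y.hasBox1 ∧ Y.hasBox2 ∧ ¬ Y.hasTru ∧ ¬ Y.hasFls ∧ Z.hasTru ∧ Z.hasFls

/-- Candidate disjunction decomposition (FEL):
    `X = Y[□₁↦Z[F↦T], □₂↦Z]` with the same side conditions. -/
def IsCddF {A : Type} (X : ETree A) (Y : ETree2 A) (Z : ETree A) : Prop :=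
  X = Y.substBoxes (Z.subst ETree.tru ETree.tru) Z ∧
  Y.hasBox1 ∧ Y.hasBox2 ∧ ¬ Y.hasTru ∧ ¬ Y.hasFls ∧ Z.hasTru ∧ Z.hasFls

/-- Conjunction decomposition (FEL): a ccd with `Z` of minimal depth. -/
def IsCdF {A : Type} (X : ETree A) (Y : ETree2 A) (Z : ETree A) : Prop :=
  IsCcdF X Y Z ∧ ∀ (Y' : ETree2 A) (Z' : ETree A), IsCcdF X Y' Z' → Z.depth ≤ Z'.depth

/-- Disjunction decomposition (FEL): a cdd with `Z` of minimal depth. -/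
def IsDdF {A : Type} (X : ETree A) (Y : ETree2 A) (Z : ETree A) : Prop :=
  IsCddF X Y Z ∧ ∀ (Y' : ETree2 A) (Z' : ETree A), IsCddF X Y' Z' → Z.depth ≤ Z'.depth

/-- T-*-decomposition (FEL): `X = Y[□↦Z]`, `Y` contains neither `T` nor `F`,
    and `Z` admits no nontrivial box decomposition. -/
def IsTsdF {A : Type} (X : ETree A) (Y : ETreeB A) (Z : ETree A) : Prop :=
  X = Y.substBox Z ∧ ¬ Y.hasTru ∧ ¬ Y.hasFls ∧
  ¬ ∃ (U : ETreeB A) (V : ETree A),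
      Z = U.substBox V ∧ U.hasBox ∧ U ≠ ETreeB.box ∧ ¬ U.hasTru ∧ ¬ U.hasFls

/-! ### SCL decompositions -/

/-- Candidate conjunction decomposition (SCL): `X = Y[□↦Z]`, `Y` contains `□`,
    `Y` contains `F` but not `T`, and `Z` contains both `T` and `F`. -/
def IsCcdS {A : Type} (X : ETree A) (Y : ETreeB A) (Z : ETree A) : Prop :=
  X = Y.substBox Z ∧ Y.hasBox ∧ Y.hasFls ∧ ¬ Y.hasTru ∧ Z.hasTru ∧ Z.hasFls

/-- Candidate disjunction decomposition (SCL): `X = Y[□↦Z]`, `Y` contains `□`,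
    `Y` contains `T` but not `F`, and `Z` contains both `T` and `F`. -/
def IsCddS {A : Type} (X : ETree A) (Y : ETreeB A) (Z : ETree A) : Prop :=
  X = Y.substBox Z ∧ Y.hasBox ∧ Y.hasTru ∧ ¬ Y.hasFls ∧ Z.hasTru ∧ Z.hasFls

/-- Conjunction decomposition (SCL): a ccd with `Z` of minimal depth. -/
def IsCdS {A : Type} (X : ETree A) (Y : ETreeB A) (Z : ETree A) : Prop :=
  IsCcdS X Y Z ∧ ∀ (Y' : ETreeB A) (Z' : ETree A), IsCcdS X Y' Z' → Z.depth ≤ Z'.depth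

/-- Disjunction decomposition (SCL): a cdd with `Z` of minimal depth. -/
def IsDdS {A : Type} (X : ETree A) (Y : ETreeB A) (Z : ETree A) : Prop :=
  IsCddS X Y Z ∧ ∀ (Y' : ETreeB A) (Z' : ETree A), IsCddS X Y' Z' → Z.depth ≤ Z'.depth

/-- Candidate T-*-decomposition (SCL). -/
def IsCtsdS {A : Type} (X : ETree A) (Y : ETreeB A) (Z : ETree A) : Prop :=
  X = Y.substBox Z ∧ ¬ Y.hasTru ∧ ¬ Y.hasFls ∧
  ¬ ∃ (U : ETreeB A) (V : ETree A),
      Z = U.substBox V ∧ U.hasBox ∧ U ≠ ETreeB.box ∧ ¬ U.hasTru ∧ ¬ U.hasFls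

/-- T-*-decomposition (SCL): a ctsd with `Z` of minimal depth. -/
def IsTsdS {A : Type} (X : ETree A) (Y : ETreeB A) (Z : ETree A) : Prop :=
  IsCtsdS X Y Z ∧ ∀ (Y' : ETreeB A) (Z' : ETree A), IsCtsdS X Y' Z' → Z.depth ≤ Z'.depth

/-- The translation `h : FTerm → STerm` from FEL-terms to SCL-terms. -/
def hTrans {A : Type} : FTerm A → STerm A
  | FTerm.tru => STerm.tru
  | FTerm.fls => STerm.fls
  | FTerm.atom a => STerm.atom a
  | FTerm.neg p => STerm.neg (hTrans p)
  | FTerm.and p q => STerm.and (STerm.or (hTrans p) (STerm.and (hTrans q) STerm.fls)) (hTrans q)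
  | FTerm.or p q => STerm.or (STerm.and (hTrans p) (STerm.or (hTrans q) STerm.tru)) (hTrans q)

namespace NonDecompAux

variable {A : Type}

lemma etree_hasLeaf : ∀ W : ETree A, W.hasTru ∨ W.hasFls
  | .tru => Or.inl trivial
  | .fls => Or.inr trivial
  | .node l _ r => by
      rcases etree_hasLeaf l with h | h
      · exact Or.inl (Or.inl h)
      · exact Or.inr (Or.inl h)

lemma boxOfNoTF : ∀ x : ETreeB A, ¬x.hasTru → ¬x.hasFls → x.hasBox
  | .tru, ht, _ => absurd trivial ht
  | .fls, _, hf => absurd trivial hf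
  | .box, _, _ => trivial
  | .node l _ r, ht, hf => by
      have := boxOfNoTF l (fun h => ht (Or.inl h)) (fun h => hf (Or.inl h))
      exact Or.inl this

lemma substBox_hasTru : ∀ x : ETreeB A, ∀ Y : ETree A, x.hasBox → Y.hasTru →
    (x.substBox Y).hasTru
  | .box, Y, _, hY => hY
  | .node l _ r, Y, hb, hY => by
      rcases hb with h | h
      · exact Or.inl (substBox_hasTru l Y h hY)
      · exact Or.inr (substBox_hasTru r Y h hY)

lemma substBox_hasFls : ∀ x : ETreeB A, ∀ Y : ETree A, x.hasBox → Y.hasFls →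
    (x.substBox Y).hasFls
  | .box, Y, _, hY => hY
  | .node l _ r, Y, hb, hY => by
      rcases hb with h | h
      · exact Or.inl (substBox_hasFls l Y h hY)
      · exact Or.inr (substBox_hasFls r Y h hY)

lemma subst_fls_id : ∀ W : ETree A, ¬W.hasTru → ∀ S : ETree A, W.subst S ETree.fls = W
  | .tru, ht, _ => absurd trivial ht
  | .fls, _, _ => rfl
  | .node l a r, ht, S => by
      simp only [ETree.subst]
      rw [subst_fls_id l (fun h => ht (Or.inl h)) S,
          subst_fls_id r (fun h => ht (Or.inr h)) S]

lemma subst_tru_id : ∀ W : ETree A, ¬W.hasFls → ∀ S : ETree A, W.subst ETree.tru S = W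
  | .tru, _, _ => rfl
  | .fls, hf, _ => absurd trivial hf
  | .node l a r, hf, S => by
      simp only [ETree.subst]
      rw [subst_tru_id l (fun h => hf (Or.inl h)) S,
          subst_tru_id r (fun h => hf (Or.inr h)) S]

lemma hasTru_subst_conj : ∀ W S : ETree A, W.hasTru → S.hasTru →
    (W.subst S ETree.fls).hasTru
  | .tru, S, _, hS => hS
  | .fls, _, hW, _ => absurd hW id
  | .node l _ r, S, hW, hS => by
      rcases hW with h | h
      · exact Or.inl (hasTru_subst_conj l S h hS)
      · exact Or.inr (hasTru_subst_conj r S h hS)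

lemma hasFls_subst_conj : ∀ W S : ETree A, W.hasFls → (W.subst S ETree.fls).hasFls
  | .tru, _, hW => absurd hW id
  | .fls, _, _ => trivial
  | .node l _ r, S, hW => by
      rcases hW with h | h
      · exact Or.inl (hasFls_subst_conj l S h)
      · exact Or.inr (hasFls_subst_conj r S h)

lemma hasFls_subst_disj : ∀ W S : ETree A, W.hasFls → S.hasFls →
    (W.subst ETree.tru S).hasFls
  | .fls, S, _, hS => hS
  | .tru, _, hW, _ => absurd hW id
  | .node l _ r, S, hW, hS => by
      rcases hW with h | h
      · exact Or.inl (hasFls_subst_disj l S h hS)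
      · exact Or.inr (hasFls_subst_disj r S h hS)

lemma hasTru_subst_disj : ∀ W S : ETree A, W.hasTru → (W.subst ETree.tru S).hasTru
  | .fls, _, hW => absurd hW id
  | .tru, _, _ => trivial
  | .node l _ r, S, hW => by
      rcases hW with h | h
      · exact Or.inl (hasTru_subst_disj l S h)
      · exact Or.inr (hasTru_subst_disj r S h)

/-- size of an evaluation tree -/
def esize : ETree A → ℕ
  | .tru => 1
  | .fls => 1
  | .node l _ r => esize l + esize r + 1

lemma esize_pos : ∀ W : ETree A, 1 ≤ esize W
  | .tru => le_refl 1
  | .fls => le_refl 1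
  | .node l _ r => by simp only [esize]; omega

lemma esize_subst_conj : ∀ W S : ETree A, W.hasTru → esize S ≤ esize (W.subst S ETree.fls)
  | .tru, S, _ => le_of_eq rfl
  | .fls, _, hW => absurd hW id
  | .node l a r, S, hW => by
      simp only [ETree.subst, esize]
      rcases hW with h | h
      · have := esize_subst_conj l S h; omega
      · have := esize_subst_conj r S h; omega

lemma esize_subst_disj : ∀ W S : ETree A, W.hasFls → esize S ≤ esize (W.subst ETree.tru S)
  | .fls, S, _ => le_of_eq rfl
  | .tru, _, hW => absurd hW id
  | .node l a r, S, hW => by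
      simp only [ETree.subst, esize]
      rcases hW with h | h
      · have := esize_subst_disj l S h; omega
      · have := esize_subst_disj r S h; omega

lemma no_self_conj (S : ETree A) (hT : S.hasTru) (l : ETree A) (b : A) (r : ETree A) :
    S ≠ (ETree.node l b r).subst S ETree.fls := by
  intro h
  by_cases hn : (ETree.node l b r).hasTru
  · have h1 : esize S = esize ((ETree.node l b r).subst S ETree.fls) := by rw [← h]
    have h2 := esize_pos (l.subst S ETree.fls)
    have h3 := esize_pos (r.subst S ETree.fls)
    simp only [ETree.subst, esize] at h1
    rcases hn with hc | hc
    · have := esize_subst_conj l S hc; omega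
    · have := esize_subst_conj r S hc; omega
  · rw [subst_fls_id _ hn] at h
    rw [h] at hT
    exact hn hT

lemma no_self_disj (S : ETree A) (hF : S.hasFls) (l : ETree A) (b : A) (r : ETree A) :
    S ≠ (ETree.node l b r).subst ETree.tru S := by
  intro h
  by_cases hn : (ETree.node l b r).hasFls
  · have h1 : esize S = esize ((ETree.node l b r).subst ETree.tru S) := by rw [← h]
    have h2 := esize_pos (l.subst ETree.tru S)
    have h3 := esize_pos (r.subst ETree.tru S)
    simp only [ETree.subst, esize] at h1
    rcases hn with hc | hc
    · have := esize_subst_disj l S hc; omega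
    · have := esize_subst_disj r S hc; omega
  · rw [subst_tru_id _ hn] at h
    rw [h] at hF
    exact hn hF

lemma cancel_conj (S : ETree A) (hT : S.hasTru) :
    ∀ W1 W2 : ETree A, W1.subst S ETree.fls = W2.subst S ETree.fls → W1 = W2
  | .tru, .tru, _ => rfl
  | .tru, .fls, h => by
      simp only [ETree.subst] at h; rw [h] at hT; exact absurd hT id
  | .tru, .node l b r, h => by
      simp only [ETree.subst] at h
      exact absurd h (no_self_conj S hT l b r)
  | .fls, .tru, h => by
      simp only [ETree.subst] at h; rw [← h] at hT; exact absurd hT id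
  | .fls, .fls, _ => rfl
  | .fls, .node l b r, h => by simp only [ETree.subst] at h; exact absurd h (by simp)
  | .node l b r, .tru, h => by
      simp only [ETree.subst] at h
      exact absurd h.symm (no_self_conj S hT l b r)
  | .node l b r, .fls, h => by simp only [ETree.subst] at h; exact absurd h (by simp)
  | .node l b r, .node l' b' r', h => by
      simp only [ETree.subst] at h
      injection h with h1 h2 h3
      rw [cancel_conj S hT l l' h1, h2, cancel_conj S hT r r' h3]

lemma cancel_disj (S : ETree A) (hF : S.hasFls) :
    ∀ W1 W2 : ETree A, W1.subst ETree.tru S = W2.subst ETree.tru S → W1 = W2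
  | .fls, .fls, _ => rfl
  | .fls, .tru, h => by
      simp only [ETree.subst] at h; rw [h] at hF; exact absurd hF id
  | .fls, .node l b r, h => by
      simp only [ETree.subst] at h
      exact absurd h (no_self_disj S hF l b r)
  | .tru, .fls, h => by
      simp only [ETree.subst] at h; rw [← h] at hF; exact absurd hF id
  | .tru, .tru, _ => rfl
  | .tru, .node l b r, h => by simp only [ETree.subst] at h; exact absurd h (by simp)
  | .node l b r, .fls, h => by
      simp only [ETree.subst] at h
      exact absurd h.symm (no_self_disj S hF l b r)
  | .node l b r, .tru, h => by simp only [ETree.subst] at h; exact absurd h (by simp)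
  | .node l b r, .node l' b' r', h => by
      simp only [ETree.subst] at h
      injection h with h1 h2 h3
      rw [cancel_disj S hF l l' h1, h2, cancel_disj S hF r r' h3]

end NonDecompAux
namespace NonDecompAux

variable {A : Type}

lemma decompA : ∀ (x : ETreeB A) (Z S Y : ETree A),
    ¬x.hasTru → ¬x.hasFls → S.hasTru →
    Z.subst S ETree.fls = x.substBox Y →
    (∃ x' : ETreeB A, S = x'.substBox Y ∧ x' ≠ ETreeB.box ∧ ¬x'.hasTru ∧ ¬x'.hasFls) ∨
    (∃ W : ETree A, Z = x.substBox W ∧ Y = W.subst S ETree.fls)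
  | .tru, _, _, _, hnt, _, _, _ => absurd trivial hnt
  | .fls, _, _, _, _, hnf, _, _ => absurd trivial hnf
  | .box, Z, S, Y, _, _, _, h => Or.inr ⟨Z, rfl, h.symm⟩
  | .node x1 a x2, Z, S, Y, hnt, hnf, hT, h => by
      cases Z with
      | tru =>
          left
          refine ⟨.node x1 a x2, ?_, by simp, hnt, hnf⟩
          simpa only [ETree.subst] using h
      | fls => exact absurd h (by simp [ETree.subst, ETreeB.substBox])
      | node z1 c z2 =>
          simp only [ETree.subst, ETreeB.substBox] at h
          injection h with h1 h2 h3
          rcases decompA x1 z1 S Y (fun hh => hnt (Or.inl hh)) (fun hh => hnf (Or.inl hh))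
              hT h1 with hL | ⟨W1, hZ1, hY1⟩
          · exact Or.inl hL
          rcases decompA x2 z2 S Y (fun hh => hnt (Or.inr hh)) (fun hh => hnf (Or.inr hh))
              hT h3 with hL | ⟨W2, hZ2, hY2⟩
          · exact Or.inl hL
          · right
            have hW : W1 = W2 := cancel_conj S hT W1 W2 (hY1 ▸ hY2 ▸ rfl)
            refine ⟨W1, ?_, hY1⟩
            simp only [ETreeB.substBox]
            rw [← hZ1, ← h2, hW, ← hZ2]

lemma decompB : ∀ (x : ETreeB A) (Z S Y : ETree A),
    ¬x.hasTru → ¬x.hasFls → S.hasFls →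
    Z.subst ETree.tru S = x.substBox Y →
    (∃ x' : ETreeB A, S = x'.substBox Y ∧ x' ≠ ETreeB.box ∧ ¬x'.hasTru ∧ ¬x'.hasFls) ∨
    (∃ W : ETree A, Z = x.substBox W ∧ Y = W.subst ETree.tru S)
  | .tru, _, _, _, hnt, _, _, _ => absurd trivial hnt
  | .fls, _, _, _, _, hnf, _, _ => absurd trivial hnf
  | .box, Z, S, Y, _, _, _, h => Or.inr ⟨Z, rfl, h.symm⟩
  | .node x1 a x2, Z, S, Y, hnt, hnf, hF, h => by
      cases Z with
      | fls =>
          left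
          refine ⟨.node x1 a x2, ?_, by simp, hnt, hnf⟩
          simpa only [ETree.subst] using h
      | tru => exact absurd h (by simp [ETree.subst, ETreeB.substBox])
      | node z1 c z2 =>
          simp only [ETree.subst, ETreeB.substBox] at h
          injection h with h1 h2 h3
          rcases decompB x1 z1 S Y (fun hh => hnt (Or.inl hh)) (fun hh => hnf (Or.inl hh))
              hF h1 with hL | ⟨W1, hZ1, hY1⟩
          · exact Or.inl hL
          rcases decompB x2 z2 S Y (fun hh => hnt (Or.inr hh)) (fun hh => hnf (Or.inr hh))
              hF h3 with hL | ⟨W2, hZ2, hY2⟩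
          · exact Or.inl hL
          · right
            have hW : W1 = W2 := cancel_disj S hF W1 W2 (hY1 ▸ hY2 ▸ rfl)
            refine ⟨W1, ?_, hY1⟩
            simp only [ETreeB.substBox]
            rw [← hZ1, ← h2, hW, ← hZ2]

lemma t_spec {p : STerm A} (h : IsST_T p) : ¬(se p).hasFls ∧ (se p).hasTru := by
  induction h with
  | tru => exact ⟨id, trivial⟩
  | @or a p1 q1 hp hq ihp ihq =>
      have hse : se (STerm.or (STerm.and (STerm.atom a) p1) q1)
          = ETree.node (se p1) a (se q1) := by
        simp only [se, ETree.subst]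
        rw [subst_tru_id _ ihp.1]
      rw [hse]
      exact ⟨fun hh => hh.elim ihp.1 ihq.1, Or.inr ihq.2⟩

lemma f_spec {p : STerm A} (h : IsST_F p) : ¬(se p).hasTru ∧ (se p).hasFls := by
  induction h with
  | fls => exact ⟨id, trivial⟩
  | @and a p1 q1 hp hq ihp ihq =>
      have hse : se (STerm.and (STerm.or (STerm.atom a) p1) q1)
          = ETree.node (se q1) a (se p1) := by
        simp only [se, ETree.subst]
        rw [subst_fls_id _ ihp.1]
      rw [hse]
      exact ⟨fun hh => hh.elim ihq.1 ihp.1, Or.inr ihp.2⟩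

lemma ell_shape {p : STerm A} (h : IsST_L p) : ∃ (a : A) (L R : ETree A),
    se p = ETree.node L a R ∧
    ((¬L.hasFls ∧ L.hasTru ∧ ¬R.hasTru ∧ R.hasFls) ∨
     (¬L.hasTru ∧ L.hasFls ∧ ¬R.hasFls ∧ R.hasTru)) := by
  cases h with
  | @pos a p1 q1 hp hq =>
      refine ⟨a, se p1, se q1, ?_, Or.inl ⟨(t_spec hp).1, (t_spec hp).2, (f_spec hq).1, (f_spec hq).2⟩⟩
      simp only [se, ETree.subst]
      rw [subst_tru_id _ (t_spec hp).1]
  | @neg a p1 q1 hp hq =>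
      refine ⟨a, se q1, se p1, ?_, Or.inr ⟨(f_spec hq).1, (f_spec hq).2, (t_spec hp).1, (t_spec hp).2⟩⟩
      simp only [se, ETree.subst]
      rw [subst_tru_id _ (t_spec hp).1]

lemma star_mixed : ∀ (n : ℕ) (P : STerm A), sizeOf P ≤ n → IsST_Star P →
    (se P).hasTru ∧ (se P).hasFls := by
  intro n
  induction n with
  | zero =>
      intro P hP _
      exfalso; cases P <;> simp at hP
  | succ n ih =>
      intro P hP hstar
      have hell : ∀ q : STerm A, IsST_L q → (se q).hasTru ∧ (se q).hasFls := by
        intro q hq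
        obtain ⟨a, L, R, hse, hc⟩ := ell_shape hq
        rw [hse]
        rcases hc with ⟨_, h2, _, h4⟩ | ⟨_, h2, _, h4⟩
        · exact ⟨Or.inl h2, Or.inr h4⟩
        · exact ⟨Or.inr h4, Or.inl h2⟩
      rcases hstar with hc | hd
      · cases hc with
        | ell hl => exact hell _ hl
        | and hp hq =>
            simp only [STerm.and.sizeOf_spec] at hP
            obtain ⟨hpT, hpF⟩ := ih _ (by omega) hp
            obtain ⟨hqT, hqF⟩ := ih _ (by omega) (IsST_Star.d hq)
            exact ⟨hasTru_subst_conj _ _ hpT hqT, hasFls_subst_conj _ _ hpF⟩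
      · cases hd with
        | ell hl => exact hell _ hl
        | or hp hq =>
            simp only [STerm.or.sizeOf_spec] at hP
            obtain ⟨hpT, hpF⟩ := ih _ (by omega) hp
            obtain ⟨hqT, hqF⟩ := ih _ (by omega) (IsST_Star.c hq)
            exact ⟨hasTru_subst_disj _ _ hpT, hasFls_subst_disj _ _ hpF hqF⟩

end NonDecompAux
namespace NonDecompAux

variable {A : Type}

lemma key : ∀ (n : ℕ) (P : STerm A), sizeOf P ≤ n → IsST_Star P →
    ∀ (X : ETreeB A) (Y : ETree A), se P = X.substBox Y → X ≠ ETreeB.box →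
    ¬X.hasTru → ¬X.hasFls → False := by
  intro n
  induction n with
  | zero =>
      intro P hP _
      exfalso; cases P <;> simp at hP
  | succ n ih =>
      intro P hP hstar X Y heq hne hnt hnf
      have hell : ∀ q : STerm A, IsST_L q → se q = X.substBox Y → False := by
        intro q hq heq
        obtain ⟨a, L, R, hse, hc⟩ := ell_shape hq
        rw [hse] at heq
        cases X with
        | tru => exact hnt trivial
        | fls => exact hnf trivial
        | box => exact hne rfl
        | node x1 b x2 =>
            simp only [ETreeB.substBox] at heq
            injection heq with h1 h2 h3
            have hb1 : x1.hasBox :=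
              boxOfNoTF x1 (fun hh => hnt (Or.inl hh)) (fun hh => hnf (Or.inl hh))
            have hb2 : x2.hasBox :=
              boxOfNoTF x2 (fun hh => hnt (Or.inr hh)) (fun hh => hnf (Or.inr hh))
            rcases hc with ⟨hL, _, hR, _⟩ | ⟨hL, _, hR, _⟩
            · rcases etree_hasLeaf Y with hY | hY
              · exact hR (h3 ▸ substBox_hasTru x2 Y hb2 hY)
              · exact hL (h1 ▸ substBox_hasFls x1 Y hb1 hY)
            · rcases etree_hasLeaf Y with hY | hY
              · exact hL (h1 ▸ substBox_hasTru x1 Y hb1 hY)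
              · exact hR (h3 ▸ substBox_hasFls x2 Y hb2 hY)
      rcases hstar with hc | hd
      · cases hc with
        | ell hl => exact hell _ hl heq
        | and hp hq =>
            simp only [STerm.and.sizeOf_spec] at hP
            simp only [se] at heq
            obtain ⟨hqT, hqF⟩ := star_mixed (sizeOf _) _ le_rfl (IsST_Star.d hq)
            rcases decompA X (se _) (se _) Y hnt hnf hqT heq with
              ⟨x', hS, hne', hnt', hnf'⟩ | ⟨W, hZ, _⟩
            · exact ih _ (by omega) (IsST_Star.d hq) x' Y hS hne' hnt' hnf'
            · exact ih _ (by omega) hp X W hZ hne hnt hnf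
      · cases hd with
        | ell hl => exact hell _ hl heq
        | or hp hq =>
            simp only [STerm.or.sizeOf_spec] at hP
            simp only [se] at heq
            obtain ⟨hqT, hqF⟩ := star_mixed (sizeOf _) _ le_rfl (IsST_Star.c hq)
            rcases decompB X (se _) (se _) Y hnt hnf hqF heq with
              ⟨x', hS, hne', hnt', hnf'⟩ | ⟨W, hZ, _⟩
            · exact ih _ (by omega) (IsST_Star.c hq) x' Y hS hne' hnt' hnf'
            · exact ih _ (by omega) hp X W hZ hne hnt hnf

end NonDecompAux

/-- non-decomposition (SCL). -/
theorem scl_non_decomposition (A : Type) [Countable A] :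
    ¬ ∃ (P : STerm A) (X : ETreeB A) (Y : ETree A),
        IsST_Star P ∧ se P = X.substBox Y ∧ X ≠ ETreeB.box ∧ X.hasBox ∧
        ¬ X.hasTru ∧ ¬ X.hasFls := by
  rintro ⟨P, X, Y, hstar, heq, hne, _, hnt, hnf⟩
  exact NonDecompAux.key (sizeOf P) P le_rfl hstar X Y heq hne hnt hnf
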